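/- For fixed r ∈ ℤ/N and x chosen uniformly at random from (ℤ/N)^k, the probability that η_r^x ≥ (2^k − 1)/(2N) is at least 1 − 4N/(2^k − 1). -/

import Mathlib

open Finset

/-- The subset sum `b · x = ∑ j, b j * x j` over `ℤ/N`. -/
def dotP {N k : ℕ} (b : Fin k → Bool) (x : Fin k → ZMod N) : ZMod N :=
  ∑ j, if b j then x j else 0

/-- `η_r^x`: the number of bit strings `b ∈ {0,1}^k` with `b · x ≡ r (mod N)`. -/
def etaN {N k : ℕ} (r : ZMod N) (x : Fin k → ZMod N) : ℕ :=
  (Finset.univ.filter fun b : Fin k → Bool => dotP b x = r).card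

/-! For nonzero `b ≠ b'` in `{0,1}^k`, the map `x ↦ (b·x, b'·x)` is a surjective homomorphism
`(ℤ/N)^k → (ℤ/N)²`, so the nonzero subset sums are uniform and pairwise independent. Hence the
number of nonzero `b` with `b·x = r` has mean `μ = (2^k-1)/N` and variance at most `μ`, and
Chebyshev's inequality bounds the proportion of `x` for which it falls below `μ/2` by `4/μ`. -/

section SecondMoment

variable {Ω ι : Type*} [Fintype Ω] (B : Finset ι) (E : ι → Ω → Prop) [∀ b, DecidablePred (E b)]

lemma sum_card_filter_comm :
    ∑ x, (#{b ∈ B | E b x} : ℝ) = ∑ b ∈ B, (#{x | E b x} : ℝ) := by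
  simp only [← sum_boole]
  exact sum_comm

lemma sum_sq_card_filter_eq_sum_sum_card_filter_and :
    ∑ x, (#{b ∈ B | E b x} : ℝ) ^ 2 = ∑ b ∈ B, ∑ b' ∈ B, (#{x | E b x ∧ E b' x} : ℝ) := by
  simp only [← sum_boole, sq, sum_mul_sum, ite_zero_mul_ite_zero, one_mul]
  rw [sum_comm]
  exact sum_congr rfl fun b _ => sum_comm

lemma sum_sq_sub_mean_of_pairwise_uniform (p : ℝ)
    (h1 : ∀ b ∈ B, (#{x | E b x} : ℝ) = p * Fintype.card Ω)
    (h2 : ∀ b ∈ B, ∀ b' ∈ B, b ≠ b' → (#{x | E b x ∧ E b' x} : ℝ) = p ^ 2 * Fintype.card Ω) :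
    ∑ x, ((#{b ∈ B | E b x} : ℝ) - #B * p) ^ 2 = Fintype.card Ω * #B * p * (1 - p) := by
  classical
  have hdiag : ∀ b ∈ B, ∑ b' ∈ B, (#{x | E b x ∧ E b' x} : ℝ)
      = p * Fintype.card Ω + (#B - 1) * (p ^ 2 * Fintype.card Ω) := by
    intro b hb
    rw [← add_sum_erase B _ hb, sum_congr rfl fun b' hb' =>
      h2 b hb b' (mem_of_mem_erase hb') (ne_of_mem_erase hb').symm]
    simp only [and_self, h1 b hb, sum_const, card_erase_of_mem hb, nsmul_eq_mul]
    rw [Nat.cast_pred (card_pos.mpr ⟨b, hb⟩)]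
  have hsq := sum_sq_card_filter_eq_sum_sum_card_filter_and B E
  rw [sum_congr rfl hdiag, sum_const, nsmul_eq_mul] at hsq
  have hlin := sum_card_filter_comm B E
  rw [sum_congr rfl h1, sum_const, nsmul_eq_mul] at hlin
  simp only [sub_sq, sum_add_distrib, sum_sub_distrib, ← sum_mul, ← mul_sum, hsq, hlin,
    sum_const, card_univ, nsmul_eq_mul]
  ring

lemma card_filter_le_abs_sub_mul_sq_le (f : Ω → ℝ) (m : ℝ) {c : ℝ} (hc : 0 ≤ c) :
    #{x | c ≤ |f x - m|} * c ^ 2 ≤ ∑ x, (f x - m) ^ 2 := by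
  calc (#{x | c ≤ |f x - m|} : ℝ) * c ^ 2 = ∑ x ∈ {x | c ≤ |f x - m|}, c ^ 2 := by
        rw [sum_const, nsmul_eq_mul]
    _ ≤ ∑ x ∈ {x | c ≤ |f x - m|}, (f x - m) ^ 2 := by
        refine sum_le_sum fun x hx => ?_
        rw [← sq_abs (f x - m)]
        exact pow_le_pow_left₀ hc (mem_filter.mp hx).2 2
    _ ≤ ∑ x, (f x - m) ^ 2 :=
        sum_le_sum_of_subset_of_nonneg (subset_univ _) fun _ _ _ => sq_nonneg _

lemma card_sub_card_filter_lt_le_card_filter_le {f g : Ω → ℝ} (hfg : ∀ x, f x ≤ g x) (c : ℝ) :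
    (Fintype.card Ω : ℝ) - #{x | f x < c} ≤ #{x | c ≤ g x} := by
  have hsplit := card_filter_add_card_filter_not (s := univ) fun x => f x < c
  have hsub : ({x | ¬f x < c} : Finset Ω) ⊆ ({x | c ≤ g x} : Finset Ω) :=
    monotone_filter_right _ fun x _ hx => (not_lt.mp hx).trans (hfg x)
  rw [card_univ] at hsplit
  have hle := card_le_card hsub
  rw [sub_le_iff_le_add', ← hsplit]
  exact_mod_cast Nat.add_le_add_left hle _

lemma card_filter_lt_half_mean_mul_le (p : ℝ)
    (h1 : ∀ b ∈ B, (#{x | E b x} : ℝ) = p * Fintype.card Ω)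
    (h2 : ∀ b ∈ B, ∀ b' ∈ B, b ≠ b' → (#{x | E b x ∧ E b' x} : ℝ) = p ^ 2 * Fintype.card Ω) :
    #{x | (#{b ∈ B | E b x} : ℝ) < #B * p / 2} * (#B * p) ≤ 4 * Fintype.card Ω := by
  set μ : ℝ := #B * p
  set A := ({x | (#{b ∈ B | E b x} : ℝ) < μ / 2} : Finset Ω)
  rcases le_or_gt μ 0 with hμ | hμ
  · exact (mul_nonpos_of_nonneg_of_nonpos (#A).cast_nonneg hμ).trans (by positivity)
  have hp : 0 < p := pos_of_mul_pos_right hμ (#B).cast_nonneg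
  have hAsub : A ⊆ ({x | μ / 2 ≤ |(#{b ∈ B | E b x} : ℝ) - μ|} : Finset Ω) :=
    monotone_filter_right _ fun x _ hx => by
      rw [abs_sub_comm]; exact le_abs.mpr (.inl (by linarith))
  have hcheb : (#A : ℝ) * (μ / 2) ^ 2 ≤ Fintype.card Ω * μ * (1 - p) := calc
    (#A : ℝ) * (μ / 2) ^ 2 ≤ #{x | μ / 2 ≤ |(#{b ∈ B | E b x} : ℝ) - μ|} * (μ / 2) ^ 2 := by
      gcongr
    _ ≤ ∑ x, ((#{b ∈ B | E b x} : ℝ) - μ) ^ 2 :=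
      card_filter_le_abs_sub_mul_sq_le (fun x => (#{b ∈ B | E b x} : ℝ)) μ (by positivity)
    _ = Fintype.card Ω * μ * (1 - p) := by
      rw [sum_sq_sub_mean_of_pairwise_uniform B E p h1 h2]; ring
  refine le_of_mul_le_mul_right ?_ hμ
  calc (#A : ℝ) * μ * μ = 4 * (#A * (μ / 2) ^ 2) := by ring
    _ ≤ 4 * (Fintype.card Ω * μ * (1 - p)) := by linarith
    _ ≤ 4 * Fintype.card Ω * μ := by
        nlinarith [mul_nonneg (mul_nonneg (Fintype.card Ω).cast_nonneg hμ.le) hp.le]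

end SecondMoment

lemma AddMonoidHom.card_fiber_mul_card_of_surjective {G M : Type*} [AddGroup G] [Fintype G]
    [AddMonoid M] [Fintype M] [DecidableEq M] (f : G →+ M) (hf : Function.Surjective f) (y : M) :
    #{g | f g = y} * Fintype.card M = Fintype.card G := by
  have h := card_eq_sum_card_fiberwise (s := univ) (t := univ) fun g _ => mem_univ (f g)
  rw [card_univ, sum_congr rfl fun z _ => AddMonoidHom.card_fiber_eq_of_mem_range f (hf z) (hf y),
    sum_const, card_univ, smul_eq_mul] at h
  rw [h, mul_comm]

section DotProduct

variable {N k : ℕ}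

lemma dotP_add (b : Fin k → Bool) (x y : Fin k → ZMod N) :
    dotP b (x + y) = dotP b x + dotP b y := by
  simp only [dotP, ← sum_add_distrib, Pi.add_apply]
  exact sum_congr rfl fun j _ => by cases b j <;> simp

lemma dotP_single (b : Fin k → Bool) (i : Fin k) (c : ZMod N) :
    dotP b (Pi.single i c) = if b i then c else 0 := by
  rw [dotP, sum_eq_single i (fun j _ hj => by simp [hj]) (by simp)]
  simp

lemma dotP_surjective {b : Fin k → Bool} (hb : b ≠ fun _ => false) :
    Function.Surjective (dotP b : (Fin k → ZMod N) → ZMod N) := by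
  obtain ⟨i, hi⟩ := Function.ne_iff.mp hb
  exact fun u => ⟨Pi.single i u, by simp_all [dotP_single]⟩

lemma dotP_prod_surjective_of_apply_eq {b b' : Fin k → Bool} {i j : Fin k} (hi : b i = true)
    (hi' : b' i = false) (hj' : b' j = true) :
    Function.Surjective fun x : Fin k → ZMod N => (dotP b x, dotP b' x) := by
  rintro ⟨u, v⟩
  refine ⟨Pi.single i (u - if b j then v else 0) + Pi.single j v, ?_⟩
  simp [dotP_add, dotP_single, hi, hi', hj']

lemma dotP_prod_surjective {b b' : Fin k → Bool} (hb : b ≠ fun _ => false)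
    (hb' : b' ≠ fun _ => false) (hne : b ≠ b') :
    Function.Surjective fun x : Fin k → ZMod N => (dotP b x, dotP b' x) := by
  obtain ⟨i, hi⟩ := Function.ne_iff.mp hne
  cases hbi : b i <;> cases hbi' : b' i <;> simp only [hbi, hbi', ne_eq, not_true] at hi
  · obtain ⟨j, hj⟩ := Function.ne_iff.mp hb
    exact Prod.swap_surjective.comp
      (dotP_prod_surjective_of_apply_eq hbi' hbi (by simpa using hj))
  · obtain ⟨j, hj⟩ := Function.ne_iff.mp hb'
    exact dotP_prod_surjective_of_apply_eq hbi hbi' (by simpa using hj)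

lemma card_filter_dotP_le_etaN (B : Finset (Fin k → Bool)) (r : ZMod N) (x : Fin k → ZMod N) :
    #{b ∈ B | dotP b x = r} ≤ etaN r x :=
  card_le_card (filter_subset_filter _ (subset_univ B))

variable [NeZero N]

lemma card_filter_dotP_eq {b : Fin k → Bool} (hb : b ≠ fun _ => false) (r : ZMod N) :
    (#{x | dotP b x = r} : ℝ) = (N : ℝ)⁻¹ * Fintype.card (Fin k → ZMod N) := by
  have h := (AddMonoidHom.mk' (dotP b) (dotP_add b)).card_fiber_mul_card_of_surjective
    (dotP_surjective hb) r
  rw [ZMod.card] at h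
  rw [eq_inv_mul_iff_mul_eq₀ (NeZero.ne _), mul_comm]
  exact_mod_cast h

lemma card_filter_dotP_and_eq {b b' : Fin k → Bool} (hb : b ≠ fun _ => false)
    (hb' : b' ≠ fun _ => false) (hne : b ≠ b') (r r' : ZMod N) :
    (#{x | dotP b x = r ∧ dotP b' x = r'} : ℝ) = (N : ℝ)⁻¹ ^ 2 * Fintype.card (Fin k → ZMod N) := by
  have h := ((AddMonoidHom.mk' (dotP b) (dotP_add b)).prod
    (AddMonoidHom.mk' (dotP b') (dotP_add b'))).card_fiber_mul_card_of_surjective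
    (dotP_prod_surjective hb hb' hne) (r, r')
  simp only [AddMonoidHom.prod_apply, AddMonoidHom.mk'_apply, Prod.mk.injEq, Fintype.card_prod,
    ZMod.card, ← sq] at h
  rw [inv_pow, eq_inv_mul_iff_mul_eq₀ (pow_ne_zero 2 (NeZero.ne _)), mul_comm]
  exact_mod_cast h

end DotProduct

/-- For fixed `r` and uniformly random `x ∈ (ℤ/N)^k`,
`Pr(η_r^x ≥ (2^k-1)/(2N)) ≥ 1 - 4N/(2^k-1)`. -/
theorem eta_large_prob {N k : ℕ} [NeZero N] (hk : 1 ≤ k) (r : ZMod N) :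
    (1 : ℝ) - 4 * N / ((2 : ℝ) ^ k - 1) ≤
      ((Finset.univ.filter fun x : Fin k → ZMod N =>
          ((2 : ℝ) ^ k - 1) / (2 * N) ≤ (etaN r x : ℝ)).card : ℝ) / (N : ℝ) ^ k := by
  set B : Finset (Fin k → Bool) := univ.erase fun _ => false
  have hB : (#B : ℝ) = 2 ^ k - 1 := by
    simp [B, card_erase_of_mem, Nat.cast_sub Nat.one_le_two_pow]
  have hBpos : (0 : ℝ) < 2 ^ k - 1 := by
    linarith [le_self_pow₀ (one_le_two (α := ℝ)) (by omega : k ≠ 0)]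
  have hN : (0 : ℝ) < N := by exact_mod_cast NeZero.pos N
  have hcard : (Fintype.card (Fin k → ZMod N) : ℝ) = N ^ k := by simp
  have hlow := card_filter_lt_half_mean_mul_le B (fun b x => dotP b x = r) (N : ℝ)⁻¹
    (fun b hb => card_filter_dotP_eq (ne_of_mem_erase hb) r)
    (fun b hb b' hb' hne =>
      card_filter_dotP_and_eq (ne_of_mem_erase hb) (ne_of_mem_erase hb') hne r r)
  have hhigh := card_sub_card_filter_lt_le_card_filter_le
    (fun x => (Nat.cast_le (α := ℝ)).mpr (card_filter_dotP_le_etaN B r x)) (#B * (N : ℝ)⁻¹ / 2)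
  rw [show ((2 : ℝ) ^ k - 1) / (2 * N) = #B * (N : ℝ)⁻¹ / 2 by rw [hB]; ring,
    le_div_iff₀ (by positivity)]
  rw [hcard] at hlow hhigh
  refine le_trans ?_ hhigh
  rw [hB] at hlow ⊢
  calc (1 - 4 * N / (2 ^ k - 1)) * (N : ℝ) ^ k
        = N ^ k - 4 * N ^ k / ((2 ^ k - 1) * (N : ℝ)⁻¹) := by field_simp
    _ ≤ N ^ k - _ := by gcongr; exact (le_div_iff₀ (by positivity)).mpr hlow
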